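/- arXiv:1509.08050 — 3 statements merged into one kernel-verified Lean document; each statement's English description precedes it below -/
import Mathlib

section
/- Let P_1 = p₁/q₁, P_2 = p₂/q₂ ∈ ℚ^d in lowest terms, let a ∈ ℤ^d with a·p₂ ≡ 0 (mod q₂), F(x) = a·x - (a·p₂)/q₂, and let v = b·(p₁/q₁) + z ∈ Λ_{P_1} with a·v ≠ 0. Define P_0 = P_1 - (F(P_1)/(a·v))·v, the intersection of the line through P_1 in direction v with the hyperplane {F = 0}. Then each coordinate of P_0 can be written as a fraction with common denominator q₁·(a·v) whose numerators are integers; consequently, if P_0 = p₀/q₀ in lowest terms, then q₀ ≤ q₁·|a·v|. -/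
/-!
Write `v = w / q₁` with `w = b p₁ + q₁ z ∈ ℤ^d` and `C = (a·p₂)/q₂ ∈ ℤ`. Clearing denominators,
`q₁ (a·w) P₀ᵢ = p₁ᵢ (a·w) - (a·p₁ - q₁ C) wᵢ`, and `p₁ᵢ (a·w) - (a·p₁) wᵢ = Σⱼ aⱼ (p₁ᵢ wⱼ - p₁ⱼ wᵢ)`
is divisible by `q₁` because the minors `p₁ᵢ wⱼ - p₁ⱼ wᵢ = q₁ (p₁ᵢ zⱼ - p₁ⱼ zᵢ)` are. Hence
`P₀ = m / D` with `m ∈ ℤ^d` and `D = a·w = q₁ (a·v)`, and a reduced denominator of `P₀` divides `D`.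
-/

open Finset

theorem mul_sum_sub_sum_mul_eq_mul_sum_minor {R ι : Type*} [CommRing R] [Fintype ι]
    (a p z : ι → R) (b q : R) (i : ι) :
    p i * ∑ j, a j * (b * p j + q * z j) - (∑ j, a j * p j) * (b * p i + q * z i) =
      q * ∑ j, a j * (p i * z j - p j * z i) := by
  simp only [mul_sum, sum_mul, ← sum_sub_distrib]
  exact sum_congr rfl fun j _ => by ring

theorem Int.dvd_of_forall_dvd_mul {ι : Type*} [Fintype ι] {p : ι → ℤ} {q D : ℤ}
    (hcop : Int.gcd (univ.gcd p) q = 1) (h : ∀ i, q ∣ D * p i) : q ∣ D := by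
  have hgcd : q ∣ |D| * univ.gcd p := by
    rw [Int.abs_eq_normalize, ← Finset.gcd_mul_left]
    exact Finset.dvd_gcd fun i _ => h i
  have hcp : IsCoprime q (univ.gcd p) := by
    rwa [Int.isCoprime_iff_gcd_eq_one, Int.gcd_comm]
  exact (dvd_abs q D).mp (hcp.dvd_of_dvd_mul_right hgcd)

theorem Int.dvd_of_forall_cast_div_eq {K ι : Type*} [Field K] [CharZero K] [Fintype ι]
    {m p : ι → ℤ} {q D : ℤ} (hD : D ≠ 0) (hq : q ≠ 0)
    (hcop : Int.gcd (univ.gcd p) q = 1) (h : ∀ i, (m i : K) / D = p i / q) : q ∣ D := by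
  refine Int.dvd_of_forall_dvd_mul hcop fun i => ⟨m i, ?_⟩
  have hi := h i
  rw [div_eq_div_iff (by exact_mod_cast hD) (by exact_mod_cast hq)] at hi
  have : (D : K) * p i = q * m i := by linear_combination -hi
  exact_mod_cast this

theorem line_hyperplane_inter_coord_eq {K : Type*} [Field K] {p w q D S C m : K}
    (hq : q ≠ 0) (hD : D ≠ 0) (hm : q * m = p * D - (S - q * C) * w) :
    p / q - (S / q - C) / (D / q) * (w / q) = m / D := by
  field_simp
  linear_combination -hm

theorem sum_mul_div_const {K ι : Type*} [Field K] [Fintype ι] (a x : ι → K) (q : K) :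
    ∑ j, a j * (x j / q) = (∑ j, a j * x j) / q := by
  simp only [sum_div, mul_div_assoc]

theorem stmt_12_general (d : ℕ) (p1 p2 : Fin d → ℤ) (q1 q2 : ℕ) (hq1 : 0 < q1) (hq2 : 0 < q2)
    (b : ℤ) (z : Fin d → ℤ) (v : Fin d → ℝ)
    (hv : ∀ i, v i = b * (p1 i / q1) + z i)
    (a : Fin d → ℤ) (hdvd : (q2 : ℤ) ∣ ∑ i, a i * p2 i)
    (F : (Fin d → ℝ) → ℝ)
    (hF : ∀ y : Fin d → ℝ, F y = (∑ i, (a i : ℝ) * y i) - (∑ i, (a i : ℝ) * p2 i) / q2)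
    (hav : ∑ i, (a i : ℝ) * v i ≠ 0)
    (P0 : Fin d → ℝ)
    (hP0 : ∀ i, P0 i = p1 i / q1 -
      (F (fun j => p1 j / q1) / (∑ j, (a j : ℝ) * v j)) * v i) :
    ∃ (m : Fin d → ℤ) (D : ℤ), (D : ℝ) = (q1 : ℝ) * ∑ j, (a j : ℝ) * v j ∧ D ≠ 0 ∧
      (∀ i, P0 i = m i / D) ∧
      ∀ (p0 : Fin d → ℤ) (q0 : ℕ), 0 < q0 →
        Int.gcd (Finset.univ.gcd p0) q0 = 1 → (∀ i, P0 i = p0 i / q0) →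
        (q0 : ℝ) ≤ (q1 : ℝ) * |∑ j, (a j : ℝ) * v j| := by
  have hq1R : (q1 : ℝ) ≠ 0 := by positivity
  obtain ⟨C, hC⟩ := hdvd
  set w : Fin d → ℤ := fun i => b * p1 i + q1 * z i
  set D : ℤ := ∑ j, a j * w j
  set m : Fin d → ℤ := fun i => (∑ j, a j * (p1 i * z j - p1 j * z i)) + C * w i
  have hvw (i : Fin d) : v i = w i / q1 := by
    rw [hv i]; push_cast [w]; field_simp
  have hav_eq : ∑ j, (a j : ℝ) * v j = D / q1 := by
    simp only [hvw, sum_mul_div_const, D]; push_cast; rfl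
  have hDv : (D : ℝ) = q1 * ∑ j, (a j : ℝ) * v j := by rw [hav_eq]; field_simp
  have hD : D ≠ 0 := by
    have : (D : ℝ) ≠ 0 := hDv ▸ mul_ne_zero hq1R hav
    exact_mod_cast this
  have hm (i : Fin d) : (q1 : ℤ) * m i = p1 i * D - (∑ j, a j * p1 j - q1 * C) * w i := by
    have := mul_sum_sub_sum_mul_eq_mul_sum_minor a p1 z b q1 i
    simp only [m, D, w]
    linear_combination -this
  have hP0m (i : Fin d) : P0 i = m i / D := by
    have hCR : ∑ j, (a j : ℝ) * p2 j = q2 * C := by exact_mod_cast hC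
    rw [hP0 i, hF, hav_eq, hvw, hCR, mul_div_cancel_left₀ _ (by positivity),
      sum_mul_div_const]
    exact line_hyperplane_inter_coord_eq hq1R (by exact_mod_cast hD) (by exact_mod_cast hm i)
  refine ⟨m, D, hDv, hD, hP0m, fun p0 q0 hq0 hcop0 hp0 => ?_⟩
  have hdvdD : (q0 : ℤ) ∣ D := Int.dvd_of_forall_cast_div_eq (K := ℝ) hD (by positivity) hcop0
    fun i => (hP0m i).symm.trans (hp0 i)
  calc (q0 : ℝ) ≤ |(D : ℝ)| := by
        exact_mod_cast Int.le_of_dvd (abs_pos.mpr hD) ((dvd_abs _ _).mpr hdvdD)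
    _ = q1 * |∑ j, (a j : ℝ) * v j| := by rw [hDv, abs_mul, Nat.abs_cast]

/-- The intersection point `P₀` of the line through `P₁` in direction `v ∈ Λ_{P₁}` with the
hyperplane `{F_{P₂} = 0}` has coordinates with common integer denominator `q₁·(a·v)`; hence
its reduced denominator satisfies `q₀ ≤ q₁ |a·v|`. -/
theorem stmt_12 (d : ℕ) (p1 p2 : Fin d → ℤ) (q1 q2 : ℕ) (hq1 : 0 < q1) (hq2 : 0 < q2)
    (hcop1 : Int.gcd (Finset.univ.gcd p1) q1 = 1)
    (hcop2 : Int.gcd (Finset.univ.gcd p2) q2 = 1)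
    (b : ℤ) (z : Fin d → ℤ) (v : Fin d → ℝ)
    (hv : ∀ i, v i = b * (p1 i / q1) + z i)
    (a : Fin d → ℤ) (hdvd : (q2 : ℤ) ∣ ∑ i, a i * p2 i)
    (F : (Fin d → ℝ) → ℝ)
    (hF : ∀ y : Fin d → ℝ, F y = (∑ i, (a i : ℝ) * y i) - (∑ i, (a i : ℝ) * p2 i) / q2)
    (hav : ∑ i, (a i : ℝ) * v i ≠ 0)
    (P0 : Fin d → ℝ)
    (hP0 : ∀ i, P0 i = p1 i / q1 -
      (F (fun j => p1 j / q1) / (∑ j, (a j : ℝ) * v j)) * v i) :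
    ∃ (m : Fin d → ℤ) (D : ℤ), (D : ℝ) = (q1 : ℝ) * ∑ j, (a j : ℝ) * v j ∧ D ≠ 0 ∧
      (∀ i, P0 i = m i / D) ∧
      ∀ (p0 : Fin d → ℤ) (q0 : ℕ), 0 < q0 →
        Int.gcd (Finset.univ.gcd p0) q0 = 1 → (∀ i, P0 i = p0 i / q0) →
        (q0 : ℝ) ≤ (q1 : ℝ) * |∑ j, (a j : ℝ) * v j| :=
  stmt_12_general d p1 p2 q1 q2 hq1 hq2 b z v hv a hdvd F hF hav P0 hP0
end

section
/- Let a = (a_1,…,a_d) ∈ ℤ^d with a ≠ 0 and ξ = max_i |a_i|, let C ∈ ℝ, and consider the affine hyperplane H = { x ∈ ℝ^d : a·x + C = 0 }. Suppose P = p/q ∈ ℚ^d lies on H. Then for any x ∈ ℝ^d with |x_i - p_i/q| < c·q^{-1-r_i} for all i (where r_i ≥ 0, Σ r_i = 1, and additionally |a_i| ≤ t^{r_i} for some t ≤ q), the Euclidean distance from x to H satisfies dist(x, H) ≤ d·c/(q·ξ). -/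
/-!
The foot of the perpendicular from `x` to `H = {y | a·y + C = 0}` is at distance
`|a·x + C| / ‖a‖₂`, and `‖a‖₂ ≥ ξ`. Since `P = p/q` lies on `H`,
`a·x + C = Σ aᵢ (xᵢ - pᵢ/q)`, and each term is at most `q^{rᵢ} · c q^{-1-rᵢ} = c/q`
because `|aᵢ| ≤ t^{rᵢ} ≤ q^{rᵢ}`.
-/

open Real

theorem Metric.infDist_le_abs_inner_add_div_norm {E : Type*} [NormedAddCommGroup E]
    [InnerProductSpace ℝ E] {a : E} (ha : a ≠ 0) (C : ℝ) (x : E) :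
    Metric.infDist x {y | inner ℝ a y + C = 0} ≤ |inner ℝ a x + C| / ‖a‖ := by
  set s := inner ℝ a x + C
  have hna : 0 < ‖a‖ := norm_pos_iff.mpr ha
  have hfoot : x - (s / ‖a‖ ^ 2) • a ∈ {y | inner ℝ a y + C = 0} := by
    simp only [Set.mem_ofPred_eq, inner_sub_right, inner_smul_right, real_inner_self_eq_norm_sq]
    field_simp
    ring
  calc Metric.infDist x _ ≤ dist x (x - (s / ‖a‖ ^ 2) • a) :=
        Metric.infDist_le_dist_of_mem hfoot
    _ = |s| / ‖a‖ := by
      rw [dist_comm, dist_self_sub_left, norm_smul, Real.norm_eq_abs, abs_div, abs_sq]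
      field_simp

theorem abs_mul_le_div_of_abs_le_rpow {q r α β c : ℝ} (hq : 0 < q) (hα : |α| ≤ q ^ r)
    (hβ : |β| ≤ c / q ^ (1 + r)) : |α * β| ≤ c / q :=
  calc |α * β| ≤ q ^ r * (c / q ^ (1 + r)) :=
        abs_mul α β ▸ mul_le_mul hα hβ (abs_nonneg β) (rpow_nonneg hq.le r)
    _ = c / q := by
      rw [rpow_add hq, rpow_one]
      field_simp [(rpow_pos_of_pos hq r).ne']

theorem abs_sum_mul_sub_le_card_mul_div {ι : Type*} [Fintype ι] {r a x P : ι → ℝ}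
    {q t c : ℝ} (hq : 0 < q) (hr : ∀ i, 0 ≤ r i) (ht : 0 ≤ t) (htq : t ≤ q)
    (hat : ∀ i, |a i| ≤ t ^ r i) (hx : ∀ i, |x i - P i| ≤ c / q ^ (1 + r i)) :
    |∑ i, a i * (x i - P i)| ≤ Fintype.card ι * c / q :=
  calc |∑ i, a i * (x i - P i)| ≤ ∑ i, |a i * (x i - P i)| := Finset.abs_sum_le_sum_abs _ _
    _ ≤ ∑ _i : ι, c / q := Finset.sum_le_sum fun i _ =>
        abs_mul_le_div_of_abs_le_rpow hq ((hat i).trans (rpow_le_rpow ht htq (hr i))) (hx i)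
    _ = Fintype.card ι * c / q := by simp [mul_div_assoc]

theorem stmt_15_general (d : ℕ) (r : Fin d → ℝ) (hr : ∀ i, 0 ≤ r i)
    (a : Fin d → ℤ) (ha : a ≠ 0)
    (ξ : ℕ) (hξub : ∀ i, (a i).natAbs ≤ ξ) (hξmem : ∃ i, (a i).natAbs = ξ)
    (C : ℝ) (H : Set (EuclideanSpace ℝ (Fin d)))
    (hH : H = {y : EuclideanSpace ℝ (Fin d) | (∑ i, (a i : ℝ) * y i) + C = 0})
    (p : Fin d → ℤ) (q : ℕ) (hq : 0 < q)
    (hP : (∑ i, (a i : ℝ) * (p i / q)) + C = 0)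
    (c t : ℝ) (ht : 0 < t) (htq : t ≤ q)
    (hat : ∀ i, |(a i : ℝ)| ≤ t ^ (r i))
    (x : EuclideanSpace ℝ (Fin d))
    (hx : ∀ i, |x i - p i / q| < c / (q : ℝ) ^ (1 + r i)) :
    Metric.infDist x H ≤ d * c / ((q : ℝ) * ξ) := by
  set A : EuclideanSpace ℝ (Fin d) := WithLp.toLp 2 (fun i => (a i : ℝ))
  have hq' : (0 : ℝ) < q := Nat.cast_pos.mpr hq
  have hA : A ≠ 0 := fun h => ha (funext fun i => by simpa [A] using congrArg (· i) h)
  have hH' : H = {y | inner ℝ A y + C = 0} := by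
    simp [hH, A, PiLp.inner_apply, mul_comm]
  have hξ : 0 < ξ := by
    obtain ⟨i, hi⟩ := Function.ne_iff.mp ha
    exact (Int.natAbs_pos.mpr hi).trans_le (hξub i)
  have hξA : (ξ : ℝ) ≤ ‖A‖ := by
    obtain ⟨i, rfl⟩ := hξmem
    simpa [A, Nat.cast_natAbs] using PiLp.norm_apply_le A i
  have hS : inner ℝ A x + C = ∑ i, (a i : ℝ) * (x i - p i / q) := by
    simp only [A, PiLp.inner_apply, RCLike.inner_apply, conj_trivial,
      mul_comm (x _), mul_sub, Finset.sum_sub_distrib]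
    linarith
  have hSle : |inner ℝ A x + C| ≤ d * c / q := by
    simpa [hS] using abs_sum_mul_sub_le_card_mul_div hq' hr ht.le htq hat fun i => (hx i).le
  calc Metric.infDist x H ≤ |inner ℝ A x + C| / ‖A‖ :=
        hH' ▸ Metric.infDist_le_abs_inner_add_div_norm hA C x
    _ ≤ (d * c / q) / ξ :=
        div_le_div₀ ((abs_nonneg _).trans hSle) hSle (by exact_mod_cast hξ) hξA
    _ = d * c / (q * ξ) := div_div _ _ _

/-- Distance estimate to the hyperplane `H = {a·x + C = 0}` through `P = p/q`:
any `x ∈ Δ_c(P)` satisfies `dist(x, H) ≤ d·c/(q·ξ)`. -/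
theorem stmt_15 (d : ℕ) (hd : 1 ≤ d) (r : Fin d → ℝ) (hr : ∀ i, 0 ≤ r i)
    (hsum : ∑ i, r i = 1)
    (a : Fin d → ℤ) (ha : a ≠ 0)
    (ξ : ℕ) (hξub : ∀ i, (a i).natAbs ≤ ξ) (hξmem : ∃ i, (a i).natAbs = ξ)
    (C : ℝ) (H : Set (EuclideanSpace ℝ (Fin d)))
    (hH : H = {y : EuclideanSpace ℝ (Fin d) | (∑ i, (a i : ℝ) * y i) + C = 0})
    (p : Fin d → ℤ) (q : ℕ) (hq : 0 < q)
    (hP : (∑ i, (a i : ℝ) * (p i / q)) + C = 0)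
    (c t : ℝ) (hc : 0 < c) (ht : 0 < t) (htq : t ≤ q)
    (hat : ∀ i, |(a i : ℝ)| ≤ t ^ (r i))
    (x : EuclideanSpace ℝ (Fin d))
    (hx : ∀ i, |x i - p i / q| < c / (q : ℝ) ^ (1 + r i)) :
    Metric.infDist x H ≤ d * c / ((q : ℝ) * ξ) :=
  stmt_15_general d r hr a ha ξ hξub hξmem C H hH p q hq hP c t ht htq hat x hx
end

section
/- Let (l_1, …, l_d) be linearly independent linear forms on ℝ^d, let L ⊂ ℝ^d be a lattice, and let A_1, …, A_d > 0 satisfy A_1⋯A_d ≥ covol(L)·|det(l_1,…,l_d)|. Then there exists x ∈ L \ {0} with |l_1(x)| ≤ A_1 and |l_i(x)| < A_i for 2 ≤ i ≤ d. -/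
/-!
With `T = (l₁, …, l_d)`, Minkowski's convex body theorem applied to the symmetric convex set
`T⁻¹(B_ε)`, where `B_ε` has the closed side `[-(A₁ + ε), A₁ + ε]` and the open sides
`(-A_i, A_i)`, yields a nonzero lattice point for every `ε > 0`, since
`vol T⁻¹(B_ε) = 2^d (A₁ + ε) A₂ ⋯ A_d / |det T| > 2^d covol(L)`.
All these points lie in the bounded set `T⁻¹(B_1)`, which meets the discrete lattice in finitely
many points, so one of them serves for a sequence `ε → 0`, and it satisfies `|l₁(x)| ≤ A₁`.
-/

open MeasureTheory Module Set Bornology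

theorem LinearMap.det_pi_ne_zero_of_linearIndependent {K ι : Type*} [Field K] [Fintype ι]
    [DecidableEq ι] {l : ι → Dual K (ι → K)} (hl : LinearIndependent K l) :
    LinearMap.det (LinearMap.pi l) ≠ 0 := by
  have hspan : Submodule.span K (Set.range l) = ⊤ :=
    hl.span_eq_top_of_card_eq_finrank' (by simp [Subspace.dual_finrank_eq])
  have hker : LinearMap.ker (LinearMap.pi l) = ⊥ := by
    rw [← Submodule.dualCoannihilator_top, ← hspan]
    refine SetLike.coe_injective ?_
    rw [Submodule.coe_dualCoannihilator_span, LinearMap.ker_pi]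
    ext x
    simp
  exact ((LinearMap.isUnit_iff_isUnit_det _).mp
    ((LinearMap.isUnit_iff_ker_eq_bot _).mpr hker)).ne_zero

theorem ZLattice.exists_ne_zero_mem_of_covolume_mul_two_pow_lt {E : Type*}
    [NormedAddCommGroup E] [NormedSpace ℝ E] [FiniteDimensional ℝ E] [MeasurableSpace E]
    [BorelSpace E] (L : Submodule ℤ E) [DiscreteTopology L] [IsZLattice ℝ L]
    (μ : Measure E) [μ.IsAddHaarMeasure] {s : Set E} (h_symm : ∀ x ∈ s, -x ∈ s)
    (h_conv : Convex ℝ s) (h : ENNReal.ofReal (covolume L μ) * 2 ^ finrank ℝ E < μ s) :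
    ∃ x ∈ L, x ≠ 0 ∧ x ∈ s := by
  have fund := ZLattice.isAddFundamentalDomain (Free.chooseBasis ℤ L) μ
  have hF : μ (ZSpan.fundamentalDomain ((Free.chooseBasis ℤ L).ofZLatticeBasis ℝ)) =
      ENNReal.ofReal (covolume L μ) := by
    rw [covolume_eq_measure_fundamentalDomain L μ fund, measureReal_def,
      ENNReal.ofReal_toReal (ZSpan.fundamentalDomain_isBounded _).measure_lt_top.ne]
  have : Countable L.toAddSubgroup := inferInstanceAs (Countable L)
  obtain ⟨x, hx0, hxs⟩ := exists_ne_zero_mem_lattice_of_measure_mul_two_pow_lt_measure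
    (L := L.toAddSubgroup) fund h_symm h_conv (hF ▸ h)
  exact ⟨x, x.2, by simpa using hx0, hxs⟩

theorem Submodule.exists_ne_zero_mem_iInter_of_antitone {E : Type*} [NormedAddCommGroup E]
    [ProperSpace E] (L : Submodule ℤ E) [DiscreteTopology L] {s : ℕ → Set E} (hs : Antitone s)
    (hs0 : IsBounded (s 0)) (h : ∀ n, ∃ x ∈ L, x ≠ 0 ∧ x ∈ s n) :
    ∃ x ∈ L, x ≠ 0 ∧ ∀ n, x ∈ s n := by
  set t : ℕ → Set E := fun n => s n ∩ ((L : Set E) \ {0})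
  have : DiscreteTopology (L : Set E) := inferInstanceAs (DiscreteTopology L)
  have : DiscreteTopology L.toAddSubgroup := inferInstanceAs (DiscreteTopology L)
  have ht0 : (t 0).Finite :=
    (Metric.finite_isBounded_inter_isClosed DiscreteTopology.isDiscrete hs0
      (AddSubgroup.isClosed_of_discrete (H := L.toAddSubgroup))).subset
      (inter_subset_inter_right _ sdiff_subset)
  have ht_sub (n : ℕ) : t n ⊆ t 0 := inter_subset_inter_left _ (hs n.zero_le)
  obtain ⟨x, hx⟩ := IsCompact.nonempty_iInter_of_sequence_nonempty_isCompact_isClosed t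
    (fun n => inter_subset_inter_left _ (hs n.le_succ))
    (fun n => let ⟨x, hxL, hx0, hxs⟩ := h n; ⟨x, hxs, hxL, hx0⟩)
    ht0.isCompact (fun n => (ht0.subset (ht_sub n)).isClosed)
  have hx (n : ℕ) : x ∈ t n := mem_iInter.mp hx n
  exact ⟨x, (hx 0).2.1, (hx 0).2.2, fun n => (hx n).1⟩

section HalfOpenBox

variable {ι : Type*} [DecidableEq ι]

def halfOpenBox (i₀ : ι) (r : ι → ℝ) : Set (ι → ℝ) :=
  univ.pi fun i => if i = i₀ then Icc (-r i) (r i) else Ioo (-r i) (r i)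

variable {i₀ : ι} {r r' : ι → ℝ} {y : ι → ℝ}

theorem mem_halfOpenBox : y ∈ halfOpenBox i₀ r ↔ |y i₀| ≤ r i₀ ∧ ∀ i ≠ i₀, |y i| < r i := by
  simp only [halfOpenBox, mem_univ_pi]
  refine ⟨fun h => ⟨?_, fun i hi => ?_⟩, fun ⟨h₀, h⟩ i => ?_⟩
  · simpa [abs_le] using h i₀
  · simpa [hi, abs_lt] using h i
  · by_cases hi : i = i₀
    · subst hi; simpa [abs_le] using h₀
    · simpa [hi, abs_lt] using h i hi

theorem abs_le_of_mem_halfOpenBox (hy : y ∈ halfOpenBox i₀ r) (i : ι) : |y i| ≤ r i := by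
  rw [mem_halfOpenBox] at hy
  by_cases hi : i = i₀
  exacts [hi ▸ hy.1, (hy.2 i hi).le]

theorem halfOpenBox_mono (h : r ≤ r') : halfOpenBox i₀ r ⊆ halfOpenBox i₀ r' := fun y hy => by
  rw [mem_halfOpenBox] at hy ⊢
  exact ⟨hy.1.trans (h i₀), fun i hi => (hy.2 i hi).trans_le (h i)⟩

theorem neg_mem_halfOpenBox (hy : y ∈ halfOpenBox i₀ r) : -y ∈ halfOpenBox i₀ r := by
  simpa [mem_halfOpenBox] using hy

theorem convex_halfOpenBox : Convex ℝ (halfOpenBox i₀ r) :=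
  convex_pi fun i _ => by split_ifs; exacts [convex_Icc _ _, convex_Ioo _ _]

theorem isBounded_halfOpenBox [Fintype ι] : IsBounded (halfOpenBox i₀ r) :=
  (Metric.isBounded_Icc (-r) r).subset fun _ hy =>
    ⟨fun i => neg_le_of_abs_le (abs_le_of_mem_halfOpenBox hy i),
      fun i => le_of_abs_le (abs_le_of_mem_halfOpenBox hy i)⟩

theorem volume_halfOpenBox [Fintype ι] (hr : 0 ≤ r) :
    volume (halfOpenBox i₀ r) = ENNReal.ofReal (2 ^ Fintype.card ι * ∏ i, r i) := by
  have h (i : ι) : volume (if i = i₀ then Icc (-r i) (r i) else Ioo (-r i) (r i)) =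
      ENNReal.ofReal (2 * r i) := by
    split_ifs <;> simp [Real.volume_Icc, Real.volume_Ioo, two_mul]
  rw [halfOpenBox, volume_pi_pi, Finset.prod_congr rfl fun i _ => h i,
    ← ENNReal.ofReal_prod_of_nonneg fun i _ => mul_nonneg zero_le_two (hr i),
    Finset.prod_mul_distrib, Finset.prod_const, Finset.card_univ]

end HalfOpenBox

section LinearForms

variable {ι : Type*} [Fintype ι] [DecidableEq ι] (L : Submodule ℤ (ι → ℝ)) [DiscreteTopology L]
  [IsZLattice ℝ L] {T : (ι → ℝ) →ₗ[ℝ] (ι → ℝ)}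

theorem ZLattice.exists_ne_zero_apply_mem_halfOpenBox_of_lt (hT : LinearMap.det T ≠ 0)
    (i₀ : ι) {r : ι → ℝ} (hr : 0 ≤ r)
    (h : ZLattice.covolume L * |LinearMap.det T| < ∏ i, r i) :
    ∃ x ∈ L, x ≠ 0 ∧ T x ∈ halfOpenBox i₀ r := by
  refine ZLattice.exists_ne_zero_mem_of_covolume_mul_two_pow_lt L volume
    (s := T ⁻¹' halfOpenBox i₀ r) (fun x hx => by simpa using neg_mem_halfOpenBox hx)
    (convex_halfOpenBox.linear_preimage T) ?_
  have hcov := ZLattice.covolume_pos L volume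
  have hdet : 0 < |LinearMap.det T| := abs_pos.mpr hT
  rw [Measure.addHaar_preimage_linearMap _ hT, volume_halfOpenBox hr,
    finrank_fintype_fun_eq_card, ← ENNReal.ofReal_ofNat, ← ENNReal.ofReal_pow zero_le_two,
    ← ENNReal.ofReal_mul hcov.le, ← ENNReal.ofReal_mul (abs_nonneg _),
    ENNReal.ofReal_lt_ofReal_iff_of_nonneg (by positivity), abs_inv, inv_mul_eq_div,
    lt_div_iff₀ hdet]
  calc ZLattice.covolume L * 2 ^ Fintype.card ι * |LinearMap.det T|
      = 2 ^ Fintype.card ι * (ZLattice.covolume L * |LinearMap.det T|) := by ring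
    _ < 2 ^ Fintype.card ι * ∏ i, r i := by gcongr

theorem ZLattice.exists_ne_zero_apply_mem_halfOpenBox_of_le (hT : LinearMap.det T ≠ 0)
    (i₀ : ι) {A : ι → ℝ} (hA : ∀ i, 0 < A i)
    (h : ZLattice.covolume L * |LinearMap.det T| ≤ ∏ i, A i) :
    ∃ x ∈ L, x ≠ 0 ∧ T x ∈ halfOpenBox i₀ A := by
  set r : ℕ → ι → ℝ := fun n => A + Pi.single i₀ (1 / ((n : ℝ) + 1))
  have hr_self (n : ℕ) : r n i₀ = A i₀ + 1 / (n + 1) := by simp [r]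
  have hr_ne (n : ℕ) {i : ι} (hi : i ≠ i₀) : r n i = A i := by simp [r, hi]
  have hAr (n : ℕ) : A ≤ r n := le_add_of_nonneg_right (Pi.single_nonneg.mpr (by positivity))
  have hr_anti : Antitone r := fun m n hmn => by simp only [r]; gcongr
  obtain ⟨x, hxL, hx0, hx⟩ := L.exists_ne_zero_mem_iInter_of_antitone
    (s := fun n => T ⁻¹' halfOpenBox i₀ (r n))
    (fun m n hmn => preimage_mono (halfOpenBox_mono (hr_anti hmn)))
    ((T.equivOfDetNeZero hT).toContinuousLinearEquiv.antilipschitz.isBounded_preimage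
      isBounded_halfOpenBox)
    (fun n => ZLattice.exists_ne_zero_apply_mem_halfOpenBox_of_lt L hT i₀
      ((show 0 ≤ A from fun i => (hA i).le).trans (hAr n))
      (h.trans_lt (Finset.prod_lt_prod (fun i _ => hA i) (fun i _ => hAr n i)
        ⟨i₀, Finset.mem_univ _, hr_self n ▸ lt_add_of_pos_right _ Nat.one_div_pos_of_nat⟩)))
  have hxr (n : ℕ) := mem_halfOpenBox.mp (hx n)
  refine ⟨x, hxL, hx0, mem_halfOpenBox.mpr ⟨?_, fun i hi => hr_ne 0 hi ▸ (hxr 0).2 i hi⟩⟩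
  have hlim : Filter.Tendsto (fun n : ℕ => A i₀ + 1 / ((n : ℝ) + 1)) Filter.atTop
      (nhds (A i₀)) := by
    simpa using tendsto_one_div_add_atTop_nhds_zero_nat.const_add (A i₀)
  exact ge_of_tendsto' hlim fun n => hr_self n ▸ (hxr n).1

end LinearForms

/-- Minkowski's linear forms theorem (Schmidt's version): given linearly independent linear
forms `l₁,…,l_d` on `ℝ^d`, a lattice `L`, and positive bounds with
`A₁⋯A_d ≥ covol(L)·|det(l₁,…,l_d)|`, there is a nonzero `x ∈ L` with `|l₁(x)| ≤ A₁`
and `|l_i(x)| < A_i` for `i ≠ 1`. -/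
theorem stmt_18 (d : ℕ) (hd : 1 ≤ d)
    (l : Fin d → ((Fin d → ℝ) →ₗ[ℝ] ℝ)) (hl : LinearIndependent ℝ l)
    (L : Submodule ℤ (Fin d → ℝ)) [DiscreteTopology L] [IsZLattice ℝ L]
    (A : Fin d → ℝ) (hA : ∀ i, 0 < A i)
    (hAL : ZLattice.covolume L * |LinearMap.det (LinearMap.pi l)| ≤ ∏ i, A i) :
    ∃ x ∈ L, x ≠ 0 ∧ |l ⟨0, hd⟩ x| ≤ A ⟨0, hd⟩ ∧
      ∀ i : Fin d, i ≠ ⟨0, hd⟩ → |l i x| < A i := by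
  obtain ⟨x, hxL, hx0, hx⟩ := ZLattice.exists_ne_zero_apply_mem_halfOpenBox_of_le L
    (LinearMap.det_pi_ne_zero_of_linearIndependent hl) ⟨0, hd⟩ hA hAL
  exact ⟨x, hxL, hx0, mem_halfOpenBox.mp hx⟩
end
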